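/- arXiv:2511.06556 — 2 statements merged into one kernel-verified Lean document; each statement's English description precedes it below -/
import Mathlib

section
/- Let T be a real random variable with continuous strictly increasing symmetric distribution function F (F(-t) = 1 - F(t)), let a, μ ∈ ℝ, s > 0, N ≥ 1, α ∈ (0,1), and δ = F⁻¹(α). Then P(a ≤ T · √s/√N + μ) ≥ 1 - α if and only if a - μ - (δ/√N)√s ≤ 0. -/
open MeasureTheory

/-- Case III reformulation: if `T` has a continuous strictly increasing
symmetric distribution function `F` and `δ = F⁻¹(α)`, then
`P(a ≤ T √s/√N + μ) ≥ 1 - α ↔ a - μ - (δ/√N)√s ≤ 0`. -/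
theorem stmt11 {Ω : Type*} [MeasurableSpace Ω] (P : Measure Ω) [IsProbabilityMeasure P]
    (T : Ω → ℝ) (hT : Measurable T)
    (F : ℝ → ℝ) (hFc : Continuous F) (hFm : StrictMono F)
    (hFdist : ∀ x : ℝ, (P {ω | T ω ≤ x}).toReal = F x)
    (hFsym : ∀ t : ℝ, F (-t) = 1 - F t)
    (a μ s : ℝ) (hs : 0 < s) (N : ℕ) (hN : 1 ≤ N)
    (α δ : ℝ) (hα : α ∈ Set.Ioo (0 : ℝ) 1) (hδ : F δ = α) :
    ENNReal.ofReal (1 - α) ≤ P {ω | a ≤ T ω * Real.sqrt s / Real.sqrt N + μ} ↔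
      a - μ - (δ / Real.sqrt N) * Real.sqrt s ≤ 0 := by
  have hsq : 0 < Real.sqrt s := Real.sqrt_pos.mpr hs
  have hNpos : (0 : ℝ) < N := by exact_mod_cast Nat.lt_of_lt_of_le Nat.zero_lt_one hN
  have hNq : 0 < Real.sqrt N := Real.sqrt_pos.mpr hNpos
  set c : ℝ := (a - μ) * Real.sqrt N / Real.sqrt s with hc
  have hset : {ω | a ≤ T ω * Real.sqrt s / Real.sqrt N + μ} = {ω | c ≤ T ω} := by
    ext ω
    simp only [Set.mem_setOf_eq]
    rw [← sub_le_iff_le_add, hc, div_le_iff₀ hsq, ← le_div_iff₀ hNq]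
  have hmes : MeasurableSet {ω | T ω < c} := hT measurableSet_Iio
  have hkey : (P {ω | T ω < c}).toReal = F c := by
    apply le_antisymm
    · rw [← hFdist c]
      exact ENNReal.toReal_mono (measure_ne_top P _)
        (measure_mono fun ω h => (le_of_lt h : T ω ≤ c))
    · have ht : Filter.Tendsto F (nhdsWithin c (Set.Iio c)) (nhds (F c)) :=
        (hFc.continuousAt).continuousWithinAt.tendsto
      refine le_of_tendsto ht ?_
      filter_upwards [self_mem_nhdsWithin] with x hx
      rw [← hFdist x]
      exact ENNReal.toReal_mono (measure_ne_top P _)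
        (measure_mono fun ω h => (lt_of_le_of_lt h hx : T ω < c))
  have hcompl : {ω | c ≤ T ω} = {ω | T ω < c}ᶜ := by
    ext ω; simp [not_lt]
  have hPge : (P {ω | c ≤ T ω}).toReal = 1 - F c := by
    rw [hcompl, measure_compl hmes (measure_ne_top P _), measure_univ,
      ENNReal.toReal_sub_of_le (prob_le_one) ENNReal.one_ne_top, ENNReal.toReal_one, hkey]
  rw [hset, ENNReal.ofReal_le_iff_le_toReal (measure_ne_top P _), hPge]
  constructor
  · intro h
    have hFc' : F c ≤ F δ := by rw [hδ]; linarith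
    have : c ≤ δ := hFm.le_iff_le.mp hFc'
    rw [hc, div_le_iff₀ hsq, ← le_div_iff₀ hNq, ← div_mul_eq_mul_div] at this
    linarith
  · intro h
    have hcd : c ≤ δ := by
      rw [hc, div_le_iff₀ hsq, ← le_div_iff₀ hNq, ← div_mul_eq_mul_div]
      linarith
    have : F c ≤ α := hδ ▸ hFm.le_iff_le.mpr hcd
    linarith
end

section
/- Let x̄, S be the sample mean and sum-of-squared-deviations matrix of a sample x₁,…,x_p ∈ ℝ^q whose joint matrix X has an elliptically contoured density with location 1_p μ' and scale I_p ⊗ Σ (Σ positive definite, p > q). Then x̄ is an unbiased estimator of μ, and if φ is the associated characteristic generator with φ'(0) finite, then E[S] = -2(p-1)φ'(0) Σ, so S/(−2(p−1)φ'(0)) is an unbiased estimator of Σ. -/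
/-!
For a test matrix `T`, the centred linear statistic `W = tr (Tᵀ (X - 1 μᵀ))` has the real
characteristic function `t ↦ φ (t² tr (Σ Tᵀ T))`, so `E sin (t W) = 0` and
`E (1 - cos (t W)) = 1 - φ (t² tr (Σ Tᵀ T))`. Since `sin (t W) / t = W sinc (t W)` and
`(1 - cos (t W)) / t² = W² sinc (t W / 2)² / 2` extend continuously to `t = 0` (dominated
convergence), letting `t → 0` gives `E W = 0` and `E W² = -2 φ'(0) tr (Σ Tᵀ T)`. Polarising with
`T` a sum of two matrix units gives `Cov (X k i, X l j) = -2 φ'(0) δ_{kl} Σ i j`, and then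
`E S = ∑_k Cov - (1/p) ∑_{k,l} Cov = -2 (p - 1) φ'(0) Σ`.
-/

open MeasureTheory Matrix Filter Topology

namespace Real

lemma sin_eq_mul_sinc (x : ℝ) : sin x = x * sinc x := by
  rcases eq_or_ne x 0 with rfl | hx
  · simp
  · rw [sinc_of_ne_zero hx]; field_simp

lemma sq_mul_sinc_half_sq (x : ℝ) : x ^ 2 * sinc (x / 2) ^ 2 = 2 * (1 - cos x) := by
  have h := cos_two_mul' (x / 2)
  rw [mul_div_cancel₀ x two_ne_zero, cos_sq'] at h
  rw [h, sin_eq_mul_sinc (x / 2)]; ring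

end Real

lemma ContinuousAt.eq_of_tendsto_nhdsNE {X Y : Type*} [TopologicalSpace X] [TopologicalSpace Y]
    [T2Space Y] {x : X} [(𝓝[≠] x).NeBot] {F G : X → Y} {L : Y} (hF : ContinuousAt F x)
    (hG : Tendsto G (𝓝[≠] x) (𝓝 L)) (hFG : ∀ y ≠ x, F y = G y) : F x = L :=
  tendsto_nhds_unique (hF.tendsto.mono_left (nhdsWithin_le_nhds (s := {x}ᶜ)))
    (hG.congr' (eventually_nhdsWithin_of_forall fun y hy => (hFG y hy).symm))

lemma tendsto_sq_nhdsNE_zero : Tendsto (fun t : ℝ => t ^ 2) (𝓝[≠] 0) (𝓝[≠] 0) :=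
  tendsto_nhdsWithin_of_tendsto_nhds_of_eventually_within _
    ((continuous_pow 2).tendsto' 0 0 (zero_pow two_ne_zero) |>.mono_left nhdsWithin_le_nhds)
    (eventually_nhdsWithin_of_forall fun _ ht => pow_ne_zero 2 ht)

lemma HasDerivAt.tendsto_one_sub_comp_sq_mul_div_sq {φ : ℝ → ℝ} {φ'0 : ℝ}
    (hφ : HasDerivAt φ φ'0 0) (hφ0 : φ 0 = 1) (s : ℝ) :
    Tendsto (fun t => (1 - φ (t ^ 2 * s)) / t ^ 2) (𝓝[≠] 0) (𝓝 (-(φ'0 * s))) := by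
  have hψ : HasDerivAt (fun v => φ (v * s)) (φ'0 * s) 0 := by
    simpa using (zero_mul s ▸ hφ).comp (0 : ℝ) (hasDerivAt_mul_const s)
  refine ((hasDerivAt_iff_tendsto_slope.mp hψ).comp tendsto_sq_nhdsNE_zero).neg.congr fun t => ?_
  simp only [Function.comp_apply, slope_def_field, zero_mul, hφ0, sub_zero]
  ring

section Moments

variable {Ω : Type*} [MeasurableSpace Ω] {P : Measure Ω}

lemma continuous_integral_mul_comp_mul {f h : Ω → ℝ} {g : ℝ → ℝ} (hf : Integrable f P)
    (hh : AEStronglyMeasurable h P) (hg : Continuous g) (hg1 : ∀ x, |g x| ≤ 1) :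
    Continuous fun t => ∫ ω, f ω * g (t * h ω) ∂P := by
  refine continuous_of_dominated (bound := fun ω => |f ω|) (fun t => ?_) (fun t => ?_) hf.abs ?_
  · exact hf.aestronglyMeasurable.mul (hg.comp_aestronglyMeasurable (hh.const_mul t))
  · filter_upwards with ω
    rw [norm_mul, Real.norm_eq_abs, Real.norm_eq_abs]
    exact mul_le_of_le_one_right (abs_nonneg _) (hg1 _)
  · filter_upwards with ω
    fun_prop

lemma integral_mul_eq_polarization {a b : Ω → ℝ} (ha : MemLp a 2 P) (hb : MemLp b 2 P) :
    ∫ ω, a ω * b ω ∂P = (∫ ω, (a ω + b ω) ^ 2 ∂P - ∫ ω, a ω ^ 2 ∂P - ∫ ω, b ω ^ 2 ∂P) / 2 := by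
  have hab : Integrable (fun ω => a ω * b ω) P := ha.integrable_mul hb
  have hexp ω : (a ω + b ω) ^ 2 = a ω ^ 2 + 2 * (a ω * b ω) + b ω ^ 2 := by ring
  simp_rw [hexp]
  rw [integral_add ?_ hb.integrable_sq, integral_add ha.integrable_sq (hab.const_mul 2),
    integral_const_mul]
  · ring
  · exact ha.integrable_sq.add (hab.const_mul 2)

lemma integral_cos_sin_of_integral_exp_eq_ofReal [IsFiniteMeasure P] {g : Ω → ℝ}
    (hg : AEStronglyMeasurable g P) {r : ℝ}
    (h : ∫ ω, Complex.exp (Complex.I * g ω) ∂P = r) :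
    ∫ ω, Real.cos (g ω) ∂P = r ∧ ∫ ω, Real.sin (g ω) ∂P = 0 := by
  have hint : Integrable (fun ω => Complex.exp (Complex.I * g ω)) P := by
    refine (integrable_const (1 : ℝ)).mono' (by fun_prop) (ae_of_all _ fun ω => ?_)
    rw [mul_comm, Complex.norm_exp_ofReal_mul_I]
  have hre := integral_re hint
  have him := integral_im hint
  rw [h] at hre him
  simp only [RCLike.re_to_complex, RCLike.im_to_complex, mul_comm Complex.I,
    Complex.exp_ofReal_mul_I_re, Complex.exp_ofReal_mul_I_im, Complex.ofReal_re,
    Complex.ofReal_im] at hre him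
  exact ⟨hre, him⟩

theorem integral_eq_zero_and_integral_sq_of_integral_exp_eq [IsProbabilityMeasure P]
    {W : Ω → ℝ} (hW : MemLp W 2 P) {φ : ℝ → ℝ} {φ'0 : ℝ} (hφ : HasDerivAt φ φ'0 0) (s : ℝ)
    (h : ∀ t : ℝ, ∫ ω, Complex.exp (Complex.I * ↑(t * W ω)) ∂P = φ (t ^ 2 * s)) :
    ∫ ω, W ω ∂P = 0 ∧ ∫ ω, W ω ^ 2 ∂P = -2 * φ'0 * s := by
  have hmeas := hW.aestronglyMeasurable
  have hcs t := integral_cos_sin_of_integral_exp_eq_ofReal (hmeas.const_mul t) (h t)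
  have hφ0 : φ 0 = 1 := by simpa using (hcs 0).1.symm
  constructor
  · have hF := continuous_integral_mul_comp_mul (hW.integrable one_le_two) hmeas
      Real.continuous_sinc Real.abs_sinc_le_one
    have hF0 := hF.continuousAt.eq_of_tendsto_nhdsNE tendsto_const_nhds fun t ht => by
      have hsin ω : W ω * Real.sinc (t * W ω) = Real.sin (t * W ω) / t := by
        rw [Real.sin_eq_mul_sinc]; field_simp
      simp_rw [hsin]
      rw [integral_div, (hcs t).2, zero_div]
    simpa using hF0
  · have hF := continuous_integral_mul_comp_mul (g := fun x => Real.sinc (x / 2) ^ 2)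
      hW.integrable_sq hmeas (by fun_prop) fun x => by
        rw [abs_pow]; exact pow_le_one₀ (abs_nonneg _) (Real.abs_sinc_le_one _)
    have hlim := (hφ.tendsto_one_sub_comp_sq_mul_div_sq hφ0 s).const_mul 2
    have hF0 := hF.continuousAt.eq_of_tendsto_nhdsNE hlim fun t ht => by
      have hcos ω : W ω ^ 2 * Real.sinc (t * W ω / 2) ^ 2
          = 2 * (1 - Real.cos (t * W ω)) / t ^ 2 := by
        rw [← Real.sq_mul_sinc_half_sq, mul_div_assoc]; field_simp
      have hcos_int : Integrable (fun ω => Real.cos (t * W ω)) P :=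
        (integrable_const (1 : ℝ)).mono' (by fun_prop)
          (ae_of_all _ fun ω => (Real.norm_eq_abs _).trans_le (Real.abs_cos_le_one _))
      simp_rw [hcos]
      rw [integral_div, integral_const_mul, integral_sub (integrable_const 1) hcos_int,
        (hcs t).1]
      simp [mul_div_assoc]
    simp only [zero_mul, zero_div, Real.sinc_zero, one_pow, mul_one] at hF0
    linarith

end Moments

section SampleCovariance

variable {ι : Type*} [Fintype ι]

lemma sum_sub_const_div_card [Nonempty ι] (x : ι → ℝ) (c : ℝ) :
    (∑ l, (x l - c)) / Fintype.card ι = (∑ l, x l) / Fintype.card ι - c := by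
  have hn : (Fintype.card ι : ℝ) ≠ 0 := Nat.cast_ne_zero.mpr Fintype.card_ne_zero
  rw [Finset.sum_sub_distrib, Finset.sum_const, Finset.card_univ, nsmul_eq_mul]
  field_simp

lemma sum_sub_mean_mul_sub_mean (a b : ι → ℝ) :
    ∑ k, (a k - (∑ l, a l) / Fintype.card ι) * (b k - (∑ l, b l) / Fintype.card ι)
      = ∑ k, a k * b k - (∑ k, a k) * (∑ k, b k) / Fintype.card ι := by
  rcases isEmpty_or_nonempty ι with hι | hι
  · simp
  have hn : (Fintype.card ι : ℝ) ≠ 0 := Nat.cast_ne_zero.mpr Fintype.card_ne_zero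
  simp only [sub_mul, mul_sub, Finset.sum_sub_distrib, ← Finset.sum_mul, ← Finset.mul_sum,
    Finset.sum_const, Finset.card_univ, nsmul_eq_mul]
  field_simp
  ring

variable {Ω : Type*} [MeasurableSpace Ω] {P : Measure Ω}

lemma integral_sum_sub_mean_mul_sub_mean [DecidableEq ι] [Nonempty ι] {a b : ι → Ω → ℝ}
    (hab : ∀ k l, Integrable (fun ω => a k ω * b l ω) P) {C : ℝ}
    (h : ∀ k l, ∫ ω, a k ω * b l ω ∂P = if k = l then C else 0) :
    ∫ ω, ∑ k, (a k ω - (∑ l, a l ω) / Fintype.card ι) * (b k ω - (∑ l, b l ω) / Fintype.card ι) ∂P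
      = (Fintype.card ι - 1) * C := by
  have hn : (Fintype.card ι : ℝ) ≠ 0 := Nat.cast_ne_zero.mpr Fintype.card_ne_zero
  have hrow k : ∫ ω, ∑ l, a k ω * b l ω ∂P = C := by
    rw [integral_finsetSum _ fun l _ => hab k l]
    simp [h]
  simp_rw [sum_sub_mean_mul_sub_mean, Finset.sum_mul_sum]
  rw [integral_sub (integrable_finsetSum _ fun k _ => hab k k)
      ((integrable_finsetSum _ fun k _ => integrable_finsetSum _ fun l _ => hab k l).div_const _),
    integral_div, integral_finsetSum _ fun k _ => hab k k,
    integral_finsetSum _ fun k _ => integrable_finsetSum _ fun l _ => hab k l]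
  simp only [h, hrow, if_true, Finset.sum_const, Finset.card_univ, nsmul_eq_mul]
  field_simp

end SampleCovariance

namespace Matrix

variable {m n : Type*} [Fintype m] [Fintype n]

/-- `tr (Tᵀ X)`; the sample `X` is typed as a plain function, as in the measure it lives under. -/
def frobeniusInner (T : Matrix m n ℝ) (X : m → n → ℝ) : ℝ := ∑ k, ∑ j, T k j * X k j

lemma frobeniusInner_add_left (T U : Matrix m n ℝ) (X : m → n → ℝ) :
    frobeniusInner (T + U) X = frobeniusInner T X + frobeniusInner U X := by
  simp only [frobeniusInner, add_apply, add_mul, Finset.sum_add_distrib]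

lemma frobeniusInner_smul_left (t : ℝ) (T : Matrix m n ℝ) (X : m → n → ℝ) :
    frobeniusInner (t • T) X = t * frobeniusInner T X := by
  simp only [frobeniusInner, smul_apply, smul_eq_mul, Finset.mul_sum, mul_assoc]

lemma frobeniusInner_single_left [DecidableEq m] [DecidableEq n] (k : m) (j : n)
    (X : m → n → ℝ) : frobeniusInner (single k j 1) X = X k j := by
  simp [frobeniusInner, single_apply, ite_and]

lemma trace_mul_transpose_single_mul_single [DecidableEq m] [DecidableEq n]
    (S : Matrix n n ℝ) (k l : m) (i j : n) :
    (S * (single k i (1 : ℝ))ᵀ * single l j (1 : ℝ)).trace = if k = l then S j i else 0 := by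
  rw [transpose_single, Matrix.mul_assoc]
  split_ifs with hkl
  · subst hkl
    simp [trace_mul_single]
  · simp [hkl]

end Matrix

section Elliptical

variable {m n : Type*} [Fintype m] [Fintype n]

lemma memLp_frobeniusInner {P : Measure (m → n → ℝ)}
    (hX : ∀ k j, MemLp (fun X : m → n → ℝ => X k j) 2 P) (T : Matrix m n ℝ) :
    MemLp (fun X => frobeniusInner T X) 2 P :=
  memLp_finsetSum _ fun k _ => memLp_finsetSum _ fun j _ => (hX k j).const_mul (T k j)

/-- `P` has the characteristic function `etr (i Tᵀ 1 μᵀ) φ (tr (S Tᵀ T))` of an elliptically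
contoured matrix law with location `1 μᵀ` and scale `I ⊗ S`. -/
def HasEllipticalCharFun (P : Measure (m → n → ℝ)) (μ : n → ℝ) (S : Matrix n n ℝ) (φ : ℝ → ℝ) :
    Prop :=
  ∀ T : Matrix m n ℝ, ∫ X, Complex.exp (Complex.I * (frobeniusInner T X : ℂ)) ∂P
    = Complex.exp (Complex.I * (frobeniusInner T (fun _ => μ) : ℂ)) * (φ ((S * Tᵀ * T).trace) : ℂ)

namespace HasEllipticalCharFun

variable {P : Measure (m → n → ℝ)} {μ : n → ℝ} {S : Matrix n n ℝ} {φ : ℝ → ℝ} {φ'0 : ℝ}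

lemma integral_exp_mul_sub (h : HasEllipticalCharFun P μ S φ) (T : Matrix m n ℝ) (t : ℝ) :
    ∫ X, Complex.exp (Complex.I * ↑(t * (frobeniusInner T X - frobeniusInner T (fun _ => μ)))) ∂P
      = φ (t ^ 2 * (S * Tᵀ * T).trace) := by
  have hT := h (t • T)
  simp only [frobeniusInner_smul_left, transpose_smul, smul_mul, Matrix.mul_smul, trace_smul,
    smul_smul, smul_eq_mul, ← sq] at hT
  have hsplit (X : m → n → ℝ) :
      Complex.exp (Complex.I * ↑(t * (frobeniusInner T X - frobeniusInner T (fun _ => μ))))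
        = Complex.exp (Complex.I * ↑(t * frobeniusInner T X))
          * Complex.exp (-(Complex.I * ↑(t * frobeniusInner T (fun _ => μ)))) := by
    rw [← Complex.exp_add]; push_cast; ring_nf
  simp_rw [hsplit]
  rw [integral_mul_const, hT, mul_right_comm, ← Complex.exp_add, add_neg_cancel, Complex.exp_zero,
    one_mul]

variable [IsProbabilityMeasure P]

lemma integral_frobeniusInner (h : HasEllipticalCharFun P μ S φ) (hφ : HasDerivAt φ φ'0 0)
    (hX : ∀ k j, MemLp (fun X : m → n → ℝ => X k j) 2 P) (T : Matrix m n ℝ) :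
    ∫ X, frobeniusInner T X ∂P = frobeniusInner T (fun _ => μ) ∧
      ∫ X, (frobeniusInner T X - frobeniusInner T (fun _ => μ)) ^ 2 ∂P
        = -2 * φ'0 * (S * Tᵀ * T).trace := by
  obtain ⟨hmean, hvar⟩ := integral_eq_zero_and_integral_sq_of_integral_exp_eq
    (W := fun X => frobeniusInner T X - frobeniusInner T (fun _ => μ))
    ((memLp_frobeniusInner hX T).sub (memLp_const _)) hφ _ (h.integral_exp_mul_sub T)
  refine ⟨?_, hvar⟩
  rwa [integral_sub ((memLp_frobeniusInner hX T).integrable one_le_two) (integrable_const _),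
    integral_const, probReal_univ, one_smul, sub_eq_zero] at hmean

variable [DecidableEq m] [DecidableEq n]

lemma integral_apply (h : HasEllipticalCharFun P μ S φ) (hφ : HasDerivAt φ φ'0 0)
    (hX : ∀ k j, MemLp (fun X : m → n → ℝ => X k j) 2 P) (k : m) (j : n) :
    ∫ X, X k j ∂P = μ j := by
  simpa [frobeniusInner_single_left] using (h.integral_frobeniusInner hφ hX (single k j 1)).1

lemma integral_sub_mul_sub (h : HasEllipticalCharFun P μ S φ) (hφ : HasDerivAt φ φ'0 0)
    (hX : ∀ k j, MemLp (fun X : m → n → ℝ => X k j) 2 P) (hS : S.IsSymm) (k l : m) (i j : n) :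
    ∫ X, (X k i - μ i) * (X l j - μ j) ∂P = if k = l then -2 * φ'0 * S i j else 0 := by
  have hvar T := (h.integral_frobeniusInner hφ hX T).2
  have hA := hvar (single k i 1)
  have hB := hvar (single l j 1)
  have hAB := hvar (single k i 1 + single l j 1)
  simp only [frobeniusInner_add_left, frobeniusInner_single_left, transpose_add, Matrix.mul_add,
    Matrix.add_mul, trace_add, trace_mul_transpose_single_mul_single, if_true] at hA hB hAB
  have hsum (X : m → n → ℝ) : X k i + X l j - (μ i + μ j) = (X k i - μ i) + (X l j - μ j) := by
    ring
  simp_rw [hsum] at hAB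
  rw [integral_mul_eq_polarization (a := fun X : m → n → ℝ => X k i - μ i)
    (b := fun X : m → n → ℝ => X l j - μ j)
    ((hX k i).sub (memLp_const _)) ((hX l j).sub (memLp_const _)), hAB, hA, hB, hS.apply i j]
  simp only [@eq_comm _ l k]
  split_ifs <;> ring

end HasEllipticalCharFun

end Elliptical

theorem stmt18_general (p q : ℕ) (hpq : q < p)
    (μ : Fin q → ℝ) (Sig : Matrix (Fin q) (Fin q) ℝ) (hSig : Sig.PosDef)
    (φ : ℝ → ℝ) (φ'0 : ℝ) (hφ : HasDerivAt φ φ'0 0)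
    (P : Measure (Fin p → Fin q → ℝ)) [IsProbabilityMeasure P]
    (hchar : ∀ T : Matrix (Fin p) (Fin q) ℝ,
      ∫ X, Complex.exp (Complex.I * ((∑ k, ∑ j, T k j * X k j : ℝ) : ℂ)) ∂P
        = Complex.exp (Complex.I * ((∑ k, ∑ j, T k j * μ j : ℝ) : ℂ)) *
            (φ ((Sig * Tᵀ * T).trace) : ℂ))
    (hmom2 : ∀ k l i j, Integrable (fun X : Fin p → Fin q → ℝ => X k i * X l j) P) :
    (∀ j, ∫ X, (∑ k, X k j) / p ∂P = μ j) ∧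
      (∀ i j,
        ∫ X, (∑ k, (X k i - (∑ l, X l i) / p) * (X k j - (∑ l, X l j) / p)) ∂P
          = -2 * ((p : ℝ) - 1) * φ'0 * Sig i j) := by
  have : Nonempty (Fin p) := ⟨⟨0, by omega⟩⟩
  have hp : (p : ℝ) ≠ 0 := Nat.cast_ne_zero.mpr (by omega)
  have hell : HasEllipticalCharFun P μ Sig φ := hchar
  have hX k j : MemLp (fun X : Fin p → Fin q → ℝ => X k j) 2 P :=
    (memLp_two_iff_integrable_sq (Continuous.aestronglyMeasurable (by fun_prop))).2
      (by simpa [sq] using hmom2 k k j j)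
  refine ⟨fun j => ?_, fun i j => ?_⟩
  · rw [integral_div, integral_finsetSum _ fun k _ => (hX k j).integrable one_le_two]
    simp [hell.integral_apply hφ hX, hp]
  · have hcov := integral_sum_sub_mean_mul_sub_mean
      (a := fun k (X : Fin p → Fin q → ℝ) => X k i - μ i)
      (b := fun k (X : Fin p → Fin q → ℝ) => X k j - μ j)
      (fun k l => ((hX k i).sub (memLp_const _)).integrable_mul ((hX l j).sub (memLp_const _)))
      (fun k l => hell.integral_sub_mul_sub hφ hX (isHermitian_iff_isSymm.mp hSig.isHermitian)
        k l i j)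
    simp only [sum_sub_const_div_card, sub_sub_sub_cancel_right] at hcov
    simp only [Fintype.card_fin] at hcov
    rw [hcov]
    ring

/-- For an elliptically contoured sample matrix `X` with location `1_p μᵀ` and
scale `I_p ⊗ Σ` (characteristic function `etr(i Tᵀ 1_p μᵀ) φ(tr(Σ Tᵀ T))`),
the sample mean `x̄` is unbiased for `μ`, and `E[S] = -2 (p-1) φ'(0) Σ`,
so `S / (-2 (p-1) φ'(0))` is unbiased for `Σ`. -/
theorem stmt18 (p q : ℕ) (hpq : q < p)
    (μ : Fin q → ℝ) (Sig : Matrix (Fin q) (Fin q) ℝ) (hSig : Sig.PosDef)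
    (φ : ℝ → ℝ) (φ'0 : ℝ) (hφ : HasDerivAt φ φ'0 0)
    (P : Measure (Fin p → Fin q → ℝ)) [IsProbabilityMeasure P]
    (hchar : ∀ T : Matrix (Fin p) (Fin q) ℝ,
      ∫ X, Complex.exp (Complex.I * ((∑ k, ∑ j, T k j * X k j : ℝ) : ℂ)) ∂P
        = Complex.exp (Complex.I * ((∑ k, ∑ j, T k j * μ j : ℝ) : ℂ)) *
            (φ ((Sig * Tᵀ * T).trace) : ℂ))
    (hmom1 : ∀ k j, Integrable (fun X : Fin p → Fin q → ℝ => X k j) P)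
    (hmom2 : ∀ k l i j, Integrable (fun X : Fin p → Fin q → ℝ => X k i * X l j) P) :
    (∀ j, ∫ X, (∑ k, X k j) / p ∂P = μ j) ∧
      (∀ i j,
        ∫ X, (∑ k, (X k i - (∑ l, X l i) / p) * (X k j - (∑ l, X l j) / p)) ∂P
          = -2 * ((p : ℝ) - 1) * φ'0 * Sig i j) :=
  stmt18_general p q hpq μ Sig hSig φ φ'0 hφ P hchar hmom2
end
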